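/- Let θ ∈ (0, π/2) and x ≥ 0. For z > 1 define F(x,z) := (1/(2θ)) · ( ∫_{α=−arctan x}^{θ} ((x·z + cos α)/(z + sin α) − x)² dα + ∫_{α=arctan x}^{θ} ((x·z − cos α)/(z + sin α) − x)² dα ). Then lim_{z→∞} z² · F(x,z) = ( (x²+1)·θ − (x²−1)·sin θ · cos θ ) / (2θ). -/

import Mathlib

open Real Filter Set intervalIntegral
open Topology

/-- The conditional second moment of the one-step increment of the slope process in
the directional growth model. -/
noncomputable def growthSecondMoment (θ x z : ℝ) : ℝ :=
  (1 / (2 * θ)) *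
    ((∫ α in (-(Real.arctan x))..θ, ((x * z + Real.cos α) / (z + Real.sin α) - x) ^ 2) +
     (∫ α in (Real.arctan x)..θ, ((x * z - Real.cos α) / (z + Real.sin α) - x) ^ 2))

/-!
Writing `r = z / (z + sin α)`, the rescaled increment is
`z * ((x z ± cos α) / (z + sin α) - x) = r * (± cos α - x sin α)`, and `r → 1` boundedly as
`z → ∞`, so by dominated convergence `z² F(x, z)` tends to `1 / (2θ)` times
`∫_{-arctan x}^θ (cos α - x sin α)² dα + ∫_{arctan x}^θ (cos α + x sin α)² dα`.
The reflection `α ↦ -α` turns the first integral into `∫_{-θ}^{arctan x} (cos α + x sin α)² dα`,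
so the sum is `∫_{-θ}^θ (cos α + x sin α)² dα = (1 + x²) θ + (1 - x²) sin θ cos θ`.
-/

lemma tendsto_div_add_const_atTop (d : ℝ) : Tendsto (fun z : ℝ => z / (z + d)) atTop (𝓝 1) := by
  have h : Tendsto (fun z : ℝ => 1 - d / (z + d)) atTop (𝓝 1) := by
    simpa using tendsto_const_nhds.sub
      (tendsto_const_nhds.div_atTop (tendsto_atTop_add_const_right atTop d tendsto_id))
  refine h.congr' ?_
  filter_upwards [eventually_gt_atTop (-d)] with z hz
  field_simp [show z + d ≠ 0 by linarith]
  ring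

lemma mul_div_add_sub_eq (c u v z : ℝ) (h : z + v ≠ 0) :
    z * ((c * z + u) / (z + v) - c) = z / (z + v) * (u - c * v) := by
  field_simp
  ring

lemma tendsto_integral_div_add_sq_mul {v w : ℝ → ℝ} {M : ℝ} (hv : Continuous v)
    (hvM : ∀ α, |v α| ≤ M) (hw : Continuous w) (a b : ℝ) :
    Tendsto (fun z => ∫ α in a..b, (z / (z + v α)) ^ 2 * w α) atTop (𝓝 (∫ α in a..b, w α)) := by
  refine tendsto_integral_filter_of_dominated_convergence (fun α => 4 * |w α|) ?_ ?_
    ((hw.abs.const_mul 4).intervalIntegrable _ _) ?_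
  · filter_upwards [eventually_gt_atTop (2 * M)] with z hz
    have hden : ∀ α, z + v α ≠ 0 := fun α => by
      linarith [neg_abs_le (v α), abs_nonneg (v α), hvM α]
    exact (((continuous_const.div (continuous_const.add hv) hden).pow 2).mul hw).aestronglyMeasurable
  · filter_upwards [eventually_gt_atTop (2 * M)] with z hz
    refine .of_forall fun α _ => ?_
    have hden : z / 2 < z + v α := by linarith [neg_abs_le (v α), hvM α]
    have hz : 0 < z := by linarith [abs_nonneg (v α), hvM α]
    have hr : 0 ≤ z / (z + v α) := div_nonneg hz.le (by linarith)
    have hr2 : z / (z + v α) ≤ 2 := by rw [div_le_iff₀ (by linarith)]; linarith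
    rw [norm_mul, norm_pow, Real.norm_eq_abs, Real.norm_eq_abs, abs_of_nonneg hr]
    gcongr
    nlinarith
  · refine .of_forall fun α _ => ?_
    simpa using ((tendsto_div_add_const_atTop (v α)).pow 2).mul_const (w α)

lemma sq_mul_growthSecondMoment (θ x : ℝ) {z : ℝ} (hz : 1 < z) :
    z ^ 2 * growthSecondMoment θ x z = 1 / (2 * θ) *
      ((∫ α in -arctan x..θ, (z / (z + sin α)) ^ 2 * (cos α - x * sin α) ^ 2) +
       ∫ α in arctan x..θ, (z / (z + sin α)) ^ 2 * (cos α + x * sin α) ^ 2) := by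
  have hden : ∀ α, z + sin α ≠ 0 := fun α => by linarith [neg_one_le_sin α]
  have hplus : ∀ α, z ^ 2 * ((x * z + cos α) / (z + sin α) - x) ^ 2
      = (z / (z + sin α)) ^ 2 * (cos α - x * sin α) ^ 2 := fun α => by
    rw [← mul_pow, ← mul_pow, mul_div_add_sub_eq _ _ _ _ (hden α)]
  have hminus : ∀ α, z ^ 2 * ((x * z - cos α) / (z + sin α) - x) ^ 2
      = (z / (z + sin α)) ^ 2 * (cos α + x * sin α) ^ 2 := fun α => by
    rw [← mul_pow, sub_eq_add_neg (x * z), mul_div_add_sub_eq _ _ _ _ (hden α)]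
    ring
  simp only [growthSecondMoment, ← hplus, ← hminus, integral_const_mul]
  ring

lemma integral_neg_self_cos_add_mul_sin_sq (c θ : ℝ) :
    ∫ α in -θ..θ, (cos α + c * sin α) ^ 2 = (1 + c ^ 2) * θ + (1 - c ^ 2) * sin θ * cos θ := by
  let P : ℝ → ℝ := fun t =>
    (t + sin t * cos t) / 2 + c * sin t ^ 2 + c ^ 2 * ((t - sin t * cos t) / 2)
  have hP : ∀ t, HasDerivAt P ((cos t + c * sin t) ^ 2) t := fun t => by
    have hsc := (hasDerivAt_sin t).mul (hasDerivAt_cos t)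
    refine (((((hasDerivAt_id t).add hsc).div_const 2).add
      (((hasDerivAt_sin t).pow 2).const_mul c)).add
      ((((hasDerivAt_id t).sub hsc).div_const 2).const_mul (c ^ 2))).congr_deriv ?_
    simp only [Nat.cast_ofNat]
    linear_combination -(1 + c ^ 2) / 2 * sin_sq_add_cos_sq t
  rw [integral_eq_sub_of_hasDerivAt (fun t _ => hP t) ((by fun_prop : Continuous fun t => (cos t + c * sin t) ^ 2).intervalIntegrable _ _)]
  simp only [P, sin_neg, cos_neg]
  ring

lemma integral_cos_sub_mul_sin_sq_add (x θ a : ℝ) :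
    (∫ α in -a..θ, (cos α - x * sin α) ^ 2) + ∫ α in a..θ, (cos α + x * sin α) ^ 2
      = (1 + x ^ 2) * θ + (1 - x ^ 2) * sin θ * cos θ := by
  have hg : Continuous fun α => (cos α + x * sin α) ^ 2 := by fun_prop
  have hreflect : ∫ α in -a..θ, (cos α - x * sin α) ^ 2 = ∫ α in -θ..a, (cos α + x * sin α) ^ 2 := by
    simpa [sin_neg, cos_neg, ← sub_eq_add_neg] using
      integral_comp_neg (a := -a) (b := θ) fun α => (cos α + x * sin α) ^ 2
  rw [hreflect, integral_add_adjacent_intervals (hg.intervalIntegrable _ _)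
    (hg.intervalIntegrable _ _), integral_neg_self_cos_add_mul_sin_sq]

theorem stmt_2_general (θ x : ℝ) :
    Filter.Tendsto (fun z : ℝ => z ^ 2 * growthSecondMoment θ x z) Filter.atTop
      (nhds (((x ^ 2 + 1) * θ - (x ^ 2 - 1) * Real.sin θ * Real.cos θ) / (2 * θ))) := by
  have hsin : ∀ α, |sin α| ≤ 1 := abs_sin_le_one
  have hlim := ((tendsto_integral_div_add_sq_mul continuous_sin hsin
    (w := fun α => (cos α - x * sin α) ^ 2) (by fun_prop) (-arctan x) θ).add
    (tendsto_integral_div_add_sq_mul continuous_sin hsin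
    (w := fun α => (cos α + x * sin α) ^ 2) (by fun_prop) (arctan x) θ)).const_mul (1 / (2 * θ))
  rw [integral_cos_sub_mul_sin_sq_add] at hlim
  refine (hlim.congr' ?_).trans_eq ?_
  · filter_upwards [eventually_gt_atTop 1] with z hz
    exact (sq_mul_growthSecondMoment θ x hz).symm
  · ring_nf

theorem stmt_2 (θ x : ℝ) (hθ : θ ∈ Set.Ioo 0 (Real.pi / 2)) (hx : 0 ≤ x) :
    Filter.Tendsto (fun z : ℝ => z ^ 2 * growthSecondMoment θ x z) Filter.atTop
      (nhds (((x ^ 2 + 1) * θ - (x ^ 2 - 1) * Real.sin θ * Real.cos θ) / (2 * θ))) :=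
  stmt_2_general θ x
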